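/- arXiv:1106.4174 — 3 statements merged into one kernel-verified Lean document; each statement's English description precedes it below -/
import Mathlib

section
/- Let [a,b] ⊂ ℝ with a < b, m ∈ ℕ, and let R(·;ε) ∈ L¹([a,b]; ℂ^{m×m}) for ε ∈ [0,ε₀]. If ‖R(·;ε)‖_{L¹} = O(1) as ε → 0⁺, then R(·;ε) ∈ 𝓜^m if and only if sup_{t∈[a,b]} ‖R^∨(t;ε)‖ → 0 as ε → 0⁺, where R^∨(t;ε) := ∫_a^t R(s;ε) ds. -/
open MeasureTheory Filter Set Topology

noncomputable section

/-- `ℂ^m` with the Euclidean norm. -/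
abbrev Vec (m : ℕ) := EuclideanSpace ℂ (Fin m)

/-- `m × m` complex matrices, viewed as continuous linear operators on `ℂ^m`. -/
abbrev Mat (m : ℕ) := Vec m →L[ℂ] Vec m

/-- `y ∈ W¹₁([a,b]; ℂ^m)`: `y` is absolutely continuous on `[a,b]`,
i.e. an indefinite integral of an `L¹` function. -/
def IsW11 (m : ℕ) (a b : ℝ) (y : ℝ → Vec m) : Prop :=
  ∃ g : ℝ → Vec m, IntegrableOn g (Icc a b) ∧
    ∀ t ∈ Icc a b, y t = y a + ∫ s in a..t, g s

/-- `y` is an absolutely continuous (Carathéodory) solution of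
`y' = A(t) y + f(t)` on `[a,b]`. -/
def IsSol (m : ℕ) (a b : ℝ) (A : ℝ → Mat m) (f : ℝ → Vec m) (y : ℝ → Vec m) : Prop :=
  IntegrableOn (fun t => A t (y t) + f t) (Icc a b) ∧
  ∀ t ∈ Icc a b, y t = y a + ∫ s in a..t, (A s (y s) + f s)

/-- `Z` is the absolutely continuous matrix solution of the Cauchy problem
`Z' = R(t) Z`, `Z(a) = I`. -/
def IsMatSol (m : ℕ) (a b : ℝ) (R : ℝ → Mat m) (Z : ℝ → Mat m) : Prop :=
  IntegrableOn (fun t => R t * Z t) (Icc a b) ∧ Z a = 1 ∧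
  ∀ t ∈ Icc a b, Z t = 1 + ∫ s in a..t, R s * Z s

/-- The class `𝓜^m`: the family `R(·;ε)`, `ε ∈ [0,ε₀]`, belongs to `𝓜^m` iff the matrix
solutions `Z(·;ε)` of `Z' = R(t;ε)Z`, `Z(a;ε) = I` converge to `I` uniformly on `[a,b]`
as `ε → 0⁺`. -/
def MemM (m : ℕ) (a b ε₀ : ℝ) (R : ℝ → ℝ → Mat m) : Prop :=
  ∃ Z : ℝ → ℝ → Mat m,
    (∀ ε ∈ Icc 0 ε₀, IsMatSol m a b (R ε) (Z ε)) ∧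
    TendstoUniformlyOn Z (fun _ => 1) (𝓝[>] (0 : ℝ)) (Icc a b)

open scoped Classical in
/-- The restriction of `y : ℝ → ℂ^m` to `[a,b]`, as an element of `C([a,b]; ℂ^m)`
(junk value `0` if `y` is not continuous on `[a,b]`). -/
def toC (m : ℕ) (a b : ℝ) (y : ℝ → Vec m) : C(Icc a b, Vec m) :=
  if h : ContinuousOn y (Icc a b) then ⟨(Icc a b).restrict y, h.restrict⟩ else 0

/-- `M = ∫_a^t [dH(s)] Y(s)`, a matrix Riemann–Stieltjes integral: for every `e > 0` there
is `δ > 0` such that every tagged partition `a = τ₀ ≤ τ₁ ≤ ⋯ ≤ τ_n = t`, `ξ_i ∈ [τ_i, τ_{i+1}]`,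
of mesh `< δ` has Riemann–Stieltjes sum within `e` of `M`. -/
def IsRSInt (m : ℕ) (H Y : ℝ → Mat m) (a t : ℝ) (M : Mat m) : Prop :=
  ∀ e > 0, ∃ δ > 0, ∀ (n : ℕ) (τ ξ : ℕ → ℝ),
    τ 0 = a → τ n = t →
    (∀ i < n, τ i ≤ τ (i + 1) ∧ τ (i + 1) - τ i < δ ∧ ξ i ∈ Icc (τ i) (τ (i + 1))) →
    ‖(∑ i ∈ Finset.range n, (H (τ (i + 1)) - H (τ i)) * Y (ξ i)) - M‖ < e

/-- `v = ∫_a^t [dH(s)] y(s)`, a vector-valued Riemann–Stieltjes integral. -/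
def IsRSIntVec (m : ℕ) (H : ℝ → Mat m) (y : ℝ → Vec m) (a t : ℝ) (v : Vec m) : Prop :=
  ∀ e > 0, ∃ δ > 0, ∀ (n : ℕ) (τ ξ : ℕ → ℝ),
    τ 0 = a → τ n = t →
    (∀ i < n, τ i ≤ τ (i + 1) ∧ τ (i + 1) - τ i < δ ∧ ξ i ∈ Icc (τ i) (τ (i + 1))) →
    ‖(∑ i ∈ Finset.range n, (H (τ (i + 1)) - H (τ i)) (y (ξ i))) - v‖ < e

/-- `G` is a Green matrix of the semi-homogeneous problem `y' = A(t)y + f`, `Uy = 0`: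
`G` is essentially bounded on the square and, for every `f ∈ L¹`, the function
`t ↦ ∫_a^b G(t,s) f(s) ds` is a solution satisfying the boundary condition. -/
def IsGreen (m : ℕ) (a b : ℝ) (A : ℝ → Mat m) (U : C(Icc a b, Vec m) →L[ℂ] Vec m)
    (G : ℝ → ℝ → Mat m) : Prop :=
  (∃ C, ∀ t ∈ Icc a b, ∀ s ∈ Icc a b, ‖G t s‖ ≤ C) ∧
  ∀ f : ℝ → Vec m, IntegrableOn f (Icc a b) →
    ∃ y : ℝ → Vec m, IsSol m a b A f y ∧ U (toC m a b y) = 0 ∧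
      ∀ t ∈ Icc a b, y t = ∫ s in a..b, (G t s) (f s)

end

/-!
If `Z(·;ε) → I` uniformly, then `R^∨(t) = (Z(t) - I) - ∫_a^t R (Z - I)` is small, because
`‖R(·;ε)‖_{L¹}` stays bounded. Conversely, exchanging the order of integration in
`∫_a^t R(s) (Z(s) - I) ds` gives
`Z(t) - I = R^∨(t) + ∫_a^t (R^∨(t) - R^∨(u)) R(u) Z(u) du`, hence
`‖Z - I‖ ≤ η (1 + 2 ‖R‖_{L¹} sup ‖Z‖)` with `η = sup ‖R^∨‖`. The bound on `Z` that is uniform in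
`ε` comes from solving `Z = I + ∫ R Z` by contraction on consecutive subintervals carrying
`L¹` mass `1/2` of `R`: the sup norm at most doubles on each, and there are at most
`⌈2 ‖R‖_{L¹}⌉ + 1` of them.
-/

theorem TendstoUniformlyOn.of_norm_sub_le_mul {ι α E F : Type*} [SeminormedAddCommGroup E]
    [SeminormedAddCommGroup F] {l : Filter ι} {s : Set α} {f : ι → α → E} {f₀ : α → E}
    {g : ι → α → F} {g₀ : α → F} (hg : TendstoUniformlyOn g g₀ l s) (K : ℝ)
    (h : ∀ δ > 0, ∀ᶠ i in l,
      (∀ x ∈ s, ‖g i x - g₀ x‖ ≤ δ) → ∀ x ∈ s, ‖f i x - f₀ x‖ ≤ K * δ) :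
    TendstoUniformlyOn f f₀ l s := by
  rw [Metric.tendstoUniformlyOn_iff] at hg ⊢
  intro e he
  have hδ : 0 < e / (|K| + 1) := by positivity
  filter_upwards [hg _ hδ, h _ hδ] with i hgi hi x hx
  have hKδ : K * (e / (|K| + 1)) < e := by
    rw [mul_div_assoc', div_lt_iff₀ (by positivity)]
    nlinarith [le_abs_self K]
  rw [dist_comm, dist_eq_norm]
  refine (hi (fun y hy => ?_) x hx).trans_lt hKδ
  rw [← dist_eq_norm, dist_comm]
  exact (hgi y hy).le

section NormBounds

variable {X E F : Type*} [MeasurableSpace X] {μ : Measure X} [NormedAddCommGroup E]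
  [NormedSpace ℝ E] [NormedAddCommGroup F]

theorem norm_setIntegral_le_integral_norm_mul {s t : Set X} (hs : MeasurableSet s)
    (hst : s ⊆ t) {R : X → F} (hR : IntegrableOn R t μ) {G : X → E} {D : ℝ} (hD : 0 ≤ D)
    (hG : ∀ x ∈ s, ‖G x‖ ≤ ‖R x‖ * D) :
    ‖∫ x in s, G x ∂μ‖ ≤ (∫ x in t, ‖R x‖ ∂μ) * D :=
  calc ‖∫ x in s, G x ∂μ‖ ≤ ∫ x in s, ‖R x‖ * D ∂μ :=
        norm_integral_le_of_norm_le ((hR.mono_set hst).norm.mul_const D)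
          (ae_restrict_of_forall_mem hs hG)
    _ = (∫ x in s, ‖R x‖ ∂μ) * D := integral_mul_const D _
    _ ≤ (∫ x in t, ‖R x‖ ∂μ) * D := mul_le_mul_of_nonneg_right
        (setIntegral_mono_set hR.norm (ae_of_all _ fun _ => norm_nonneg _) hst.eventuallyLE) hD

theorem norm_intervalIntegral_le_integral_norm_mul {c d t : ℝ} (ht : t ∈ Icc c d) {R : ℝ → F}
    (hR : IntegrableOn R (Icc c d)) {G : ℝ → E} {D : ℝ} (hD : 0 ≤ D)
    (hG : ∀ x ∈ Icc c d, ‖G x‖ ≤ ‖R x‖ * D) :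
    ‖∫ x in c..t, G x‖ ≤ (∫ x in Icc c d, ‖R x‖) * D := by
  have hsub : Ioc c t ⊆ Icc c d := Ioc_subset_Icc_self.trans (Icc_subset_Icc_right ht.2)
  rw [intervalIntegral.integral_of_le ht.1]
  exact norm_setIntegral_le_integral_norm_mul measurableSet_Ioc hsub hR hD
    fun x hx => hG x (hsub hx)

end NormBounds

theorem MeasureTheory.IntegrableOn.intervalIntegrable_of_mem_Icc {E : Type*}
    [NormedAddCommGroup E] {f : ℝ → E} {a b t : ℝ} (hf : IntegrableOn f (Icc a b))
    (ht : t ∈ Icc a b) : IntervalIntegrable f volume a t :=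
  (intervalIntegrable_iff_integrableOn_Icc_of_le ht.1).2
    (hf.mono_set (Icc_subset_Icc_right ht.2))

theorem exists_setIntegral_Icc_eq {ρ : ℝ → ℝ} {c b x : ℝ} (hcb : c ≤ b)
    (hρ : IntegrableOn ρ (Icc c b)) (hx : x ∈ Icc 0 (∫ s in Icc c b, ρ s)) :
    ∃ d ∈ Icc c b, ∫ s in Icc c d, ρ s = x := by
  have hIcc : ∀ d, c ≤ d → ∫ s in Icc c d, ρ s = ∫ s in c..d, ρ s := fun d hd => by
    rw [intervalIntegral.integral_of_le hd, integral_Icc_eq_integral_Ioc]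
  have hcont : ContinuousOn (fun d => ∫ s in c..d, ρ s) (Icc c b) := by
    have := intervalIntegral.continuousOn_primitive_interval (μ := volume) (a := c) (b := b)
      (f := ρ) (by rwa [uIcc_of_le hcb])
    rwa [uIcc_of_le hcb] at this
  rw [hIcc b hcb] at hx
  obtain ⟨d, hd, hdx⟩ := intermediate_value_Icc hcb hcont (by simpa using hx)
  exact ⟨d, hd, (hIcc d hd.1).trans hdx⟩

section IntegralEquation

variable {A : Type*} [NormedRing A] [NormedAlgebra ℝ A]

def IsIntegralSolOn (R : ℝ → A) (M : A) (c d : ℝ) (Z : ℝ → A) : Prop :=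
  IntegrableOn (fun t => R t * Z t) (Icc c d) ∧ ∀ t ∈ Icc c d, Z t = M + ∫ s in c..t, R s * Z s

theorem IsIntegralSolOn.apply_left {R Z : ℝ → A} {M : A} {c d : ℝ}
    (hZ : IsIntegralSolOn R M c d Z) (hcd : c ≤ d) : Z c = M := by
  simpa using hZ.2 c (left_mem_Icc.2 hcd)

theorem IsIntegralSolOn.piecewise {R Z₁ Z₂ : ℝ → A} {M : A} {c d e : ℝ} (hcd : c ≤ d)
    (hde : d ≤ e) (h₁ : IsIntegralSolOn R M c d Z₁) (h₂ : IsIntegralSolOn R (Z₁ d) d e Z₂) :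
    IsIntegralSolOn R M c e (fun t => if t ≤ d then Z₁ t else Z₂ t) := by
  set Z : ℝ → A := fun t => if t ≤ d then Z₁ t else Z₂ t
  have hZ₁ : EqOn (fun t => R t * Z t) (fun t => R t * Z₁ t) (Icc c d) := fun t ht => by
    simp only [Z, if_pos ht.2]
  have hZ₂ : EqOn (fun t => R t * Z t) (fun t => R t * Z₂ t) (Icc d e) := fun t ht => by
    rcases ht.1.eq_or_lt with rfl | hlt
    · simp only [Z, le_refl, if_true, h₂.apply_left hde]
    · simp only [Z, if_neg (not_le.2 hlt)]
  have hint₁ := h₁.1.congr_fun hZ₁.symm measurableSet_Icc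
  have hint₂ := h₂.1.congr_fun hZ₂.symm measurableSet_Icc
  refine ⟨Icc_union_Icc_eq_Icc hcd hde ▸ hint₁.union hint₂, fun t ht => ?_⟩
  by_cases htd : t ≤ d
  · have hct : Icc c t ⊆ Icc c d := Icc_subset_Icc_right htd
    rw [intervalIntegral.integral_congr (hZ₁.mono (uIcc_of_le ht.1 ▸ hct)),
      ← h₁.2 t ⟨ht.1, htd⟩]
    exact if_pos htd
  · have hdt : d ≤ t := le_of_not_ge htd
    have hdt' : Icc d t ⊆ Icc d e := Icc_subset_Icc_right ht.2
    rw [← intervalIntegral.integral_add_adjacent_intervals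
        (hint₁.intervalIntegrable_of_mem_Icc (right_mem_Icc.2 hcd))
        (hint₂.intervalIntegrable_of_mem_Icc ⟨hdt, ht.2⟩),
      intervalIntegral.integral_congr (hZ₁.mono (uIcc_of_le hcd).subset),
      intervalIntegral.integral_congr (hZ₂.mono (uIcc_of_le hdt ▸ hdt')),
      ← add_assoc, ← h₁.2 d (right_mem_Icc.2 hcd), ← h₂.2 t ⟨hdt, ht.2⟩]
    exact if_neg htd

end IntegralEquation

section Picard

variable {A : Type*} [NormedRing A] {c d : ℝ} {R : ℝ → A}

theorem integrableOn_mul_IccExtend (hcd : c ≤ d) (hR : IntegrableOn R (Icc c d))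
    (W : C(Icc c d, A)) : IntegrableOn (fun s => R s * W.IccExtend hcd s) (Icc c d) :=
  hR.mul_continuousOn (W.IccExtend hcd).continuous.continuousOn isCompact_Icc

variable [NormedAlgebra ℝ A]

noncomputable def picard (hcd : c ≤ d) (hR : IntegrableOn R (Icc c d)) (M : A)
    (W : C(Icc c d, A)) : C(Icc c d, A) where
  toFun t := M + ∫ s in c..t, R s * W.IccExtend hcd s
  continuous_toFun := by
    have := intervalIntegral.continuousOn_primitive_interval (μ := volume) (a := c) (b := d)
      (by rw [uIcc_of_le hcd]; exact integrableOn_mul_IccExtend hcd hR W)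
    rw [uIcc_of_le hcd] at this
    exact continuous_const.add this.domRestrict

theorem norm_picard_apply_sub_le (hcd : c ≤ d) (hR : IntegrableOn R (Icc c d)) (M : A)
    (W₁ W₂ : C(Icc c d, A)) {D : ℝ} (hD : 0 ≤ D) (hW : ∀ t, ‖W₁ t - W₂ t‖ ≤ D)
    (t : Icc c d) :
    ‖picard hcd hR M W₁ t - picard hcd hR M W₂ t‖ ≤ (∫ s in Icc c d, ‖R s‖) * D := by
  have hi (W : C(Icc c d, A)) :=
    (integrableOn_mul_IccExtend hcd hR W).intervalIntegrable_of_mem_Icc t.2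
  simp only [picard, ContinuousMap.coe_mk, add_sub_add_left_eq_sub,
    ← intervalIntegral.integral_sub (hi W₁) (hi W₂), ← mul_sub]
  refine norm_intervalIntegral_le_integral_norm_mul t.2 hR hD fun s _ => ?_
  exact (norm_mul_le _ _).trans (mul_le_mul_of_nonneg_left (hW _) (norm_nonneg _))

end Picard

section Existence

variable {A : Type*} [NormedRing A] [NormedAlgebra ℝ A] [CompleteSpace A] {R : ℝ → A}

theorem exists_isIntegralSolOn_of_integral_norm_le_half {c d : ℝ} (hcd : c ≤ d)
    (hR : IntegrableOn R (Icc c d)) (hhalf : ∫ s in Icc c d, ‖R s‖ ≤ 1 / 2) (M : A) :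
    ∃ Z, IsIntegralSolOn R M c d Z ∧ ∀ t ∈ Icc c d, ‖Z t‖ ≤ 2 * ‖M‖ := by
  have hcontr : ContractingWith (1 / 2) (picard hcd hR M) := by
    refine ⟨by norm_num, LipschitzWith.of_dist_le_mul fun W₁ W₂ => ?_⟩
    rw [ContinuousMap.dist_le (by positivity)]
    intro t
    rw [dist_eq_norm]
    refine (norm_picard_apply_sub_le hcd hR M W₁ W₂ dist_nonneg
      (fun s => by rw [← dist_eq_norm]; exact ContinuousMap.dist_apply_le_dist s) t).trans ?_
    push_cast
    exact mul_le_mul_of_nonneg_right hhalf (dist_nonneg (x := W₁) (y := W₂))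
  set W := ContractingWith.fixedPoint _ hcontr
  have hW (t : Icc c d) : W t = M + ∫ s in c..t, R s * W.IccExtend hcd s :=
    (DFunLike.congr_fun hcontr.fixedPoint_isFixedPt t).symm
  refine ⟨W.IccExtend hcd, ⟨integrableOn_mul_IccExtend hcd hR W, fun t ht => ?_⟩, ?_⟩
  · rw [ContinuousMap.coe_IccExtend, Set.IccExtend_of_mem hcd _ ht]
    exact hW ⟨t, ht⟩
  · have hWM : ‖W‖ ≤ ‖M‖ + 1 / 2 * ‖W‖ := by
      refine (ContinuousMap.norm_le _ (by positivity)).2 fun t => ?_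
      rw [hW t]
      refine (norm_add_le _ _).trans (add_le_add_right ?_ _)
      refine (norm_intervalIntegral_le_integral_norm_mul t.2 hR (norm_nonneg W) fun s _ =>
        (norm_mul_le _ _).trans (mul_le_mul_of_nonneg_left (W.norm_coe_le_norm _)
          (norm_nonneg _))).trans ?_
      exact mul_le_mul_of_nonneg_right hhalf (norm_nonneg W)
    intro t _
    exact (W.norm_coe_le_norm _).trans (by linarith)

theorem exists_isIntegralSolOn_norm_le_two_pow (n : ℕ) {c b : ℝ} (hcb : c ≤ b)
    (hR : IntegrableOn R (Icc c b)) (hn : ∫ s in Icc c b, ‖R s‖ ≤ n / 2) (M : A) :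
    ∃ Z, IsIntegralSolOn R M c b Z ∧ ∀ t ∈ Icc c b, ‖Z t‖ ≤ 2 ^ (n + 1) * ‖M‖ := by
  have hlocal (k : ℕ) {c : ℝ} (hcb : c ≤ b) (hR : IntegrableOn R (Icc c b))
      (hhalf : ∫ s in Icc c b, ‖R s‖ ≤ 1 / 2) (M : A) :
      ∃ Z, IsIntegralSolOn R M c b Z ∧ ∀ t ∈ Icc c b, ‖Z t‖ ≤ 2 ^ (k + 1) * ‖M‖ := by
    obtain ⟨Z, hZ, hZM⟩ := exists_isIntegralSolOn_of_integral_norm_le_half hcb hR hhalf M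
    refine ⟨Z, hZ, fun t ht => (hZM t ht).trans ?_⟩
    exact mul_le_mul_of_nonneg_right (le_self_pow₀ one_le_two k.succ_ne_zero) (norm_nonneg M)
  induction n generalizing c M with
  | zero => exact hlocal 0 hcb hR (hn.trans (by norm_num)) M
  | succ n ih =>
    by_cases hhalf : ∫ s in Icc c b, ‖R s‖ ≤ 1 / 2
    · exact hlocal (n + 1) hcb hR hhalf M
    obtain ⟨d, ⟨hcd, hdb⟩, hd⟩ :=
      exists_setIntegral_Icc_eq hcb hR.norm ⟨by norm_num, (not_le.1 hhalf).le⟩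
    have hRcd := hR.mono_set (Icc_subset_Icc_right hdb)
    have hRdb := hR.mono_set (Icc_subset_Icc_left hcd)
    have hsplit :
        ∫ s in Icc c b, ‖R s‖ = (∫ s in Icc c d, ‖R s‖) + ∫ s in Icc d b, ‖R s‖ := by
      simp only [integral_Icc_eq_integral_Ioc, ← intervalIntegral.integral_of_le hcb,
        ← intervalIntegral.integral_of_le hcd, ← intervalIntegral.integral_of_le hdb]
      exact (intervalIntegral.integral_add_adjacent_intervals
        (IntegrableOn.intervalIntegrable_of_mem_Icc hR.norm ⟨hcd, hdb⟩)
        (IntegrableOn.intervalIntegrable_of_mem_Icc hRdb.norm (right_mem_Icc.2 hdb))).symm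
    obtain ⟨Z₁, h₁, hZ₁⟩ := exists_isIntegralSolOn_of_integral_norm_le_half hcd hRcd hd.le M
    obtain ⟨Z₂, h₂, hZ₂⟩ := ih hdb hRdb (by push_cast at hn; linarith) (Z₁ d)
    refine ⟨_, h₁.piecewise hcd hdb h₂, fun t ht => ?_⟩
    split_ifs with htd
    · exact (hZ₁ t ⟨ht.1, htd⟩).trans (mul_le_mul_of_nonneg_right
        (le_self_pow₀ one_le_two (by omega)) (norm_nonneg M))
    · calc ‖Z₂ t‖ ≤ 2 ^ (n + 1) * ‖Z₁ d‖ := hZ₂ t ⟨le_of_not_ge htd, ht.2⟩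
        _ ≤ 2 ^ (n + 1) * (2 * ‖M‖) := by gcongr; exact hZ₁ d (right_mem_Icc.2 hcd)
        _ = 2 ^ (n + 1 + 1) * ‖M‖ := by ring

theorem exists_isIntegralSolOn_forall_norm_le_two_pow {c b : ℝ} (hcb : c ≤ b)
    (hR : IntegrableOn R (Icc c b)) (M : A) :
    ∃ Z, IsIntegralSolOn R M c b Z ∧ ∀ n : ℕ, ∫ s in Icc c b, ‖R s‖ ≤ n / 2 →
      ∀ t ∈ Icc c b, ‖Z t‖ ≤ 2 ^ (n + 1) * ‖M‖ := by
  set N := ⌈2 * ∫ s in Icc c b, ‖R s‖⌉₊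
  have hN : ∫ s in Icc c b, ‖R s‖ ≤ N / 2 := by
    linarith [Nat.le_ceil (2 * ∫ s in Icc c b, ‖R s‖)]
  obtain ⟨Z, hZ, hZN⟩ := exists_isIntegralSolOn_norm_le_two_pow N hcb hR hN M
  refine ⟨Z, hZ, fun n hn t ht => (hZN t ht).trans ?_⟩
  have hNn : N ≤ n := Nat.ceil_le.2 (by linarith)
  gcongr
  exact one_le_two

end Existence

section Decomposition

variable {A : Type*} [NormedRing A] [NormedAlgebra ℝ A]

theorem intervalIntegral_mul_primitive {f g : ℝ → A} {a t : ℝ} (hat : a ≤ t)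
    (hf : IntervalIntegrable f volume a t) (hg : IntervalIntegrable g volume a t) :
    ∫ s in a..t, f s * ∫ u in a..s, g u = ∫ u in a..t, (∫ s in u..t, f s) * g u := by
  rw [intervalIntegrable_iff_integrableOn_Ioc_of_le hat] at hf hg
  set F : ℝ × ℝ → A := {p | p.2 ≤ p.1}.indicator fun p => f p.1 * g p.2
  have hF : Integrable F ((volume.restrict (Ioc a t)).prod (volume.restrict (Ioc a t))) :=
    (hf.mul_prod hg).indicator (measurableSet_le measurable_snd measurable_fst)
  have hs : ∀ s ∈ Ioc a t, f s * ∫ u in a..s, g u = ∫ u in Ioc a t, F (s, u) := by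
    intro s hs
    have : (fun u => F (s, u)) = (Iic s).indicator fun u => f s * g u := by
      ext u; simp [F, Set.indicator_apply]
    rw [this, setIntegral_indicator measurableSet_Iic, Ioc_inter_Iic, min_eq_right hs.2,
      intervalIntegral.integral_of_le hs.1.le,
      integral_const_mul_of_integrable (hg.mono_set (Ioc_subset_Ioc_right hs.2))]
  have hu : ∀ u ∈ Ioc a t, (∫ s in u..t, f s) * g u = ∫ s in Ioc a t, F (s, u) := by
    intro u hu
    have : (fun s => F (s, u)) = (Ici u).indicator fun s => f s * g u := by
      ext s; simp [F, Set.indicator_apply]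
    have hinter : Ioc a t ∩ Ici u = Icc u t := by
      ext x; simp only [mem_inter_iff, mem_Ioc, mem_Ici, mem_Icc]
      constructor
      · rintro ⟨⟨-, hxt⟩, hux⟩; exact ⟨hux, hxt⟩
      · rintro ⟨hux, hxt⟩; exact ⟨⟨hu.1.trans_le hux, hxt⟩, hux⟩
    rw [this, setIntegral_indicator measurableSet_Ici, hinter, integral_Icc_eq_integral_Ioc,
      intervalIntegral.integral_of_le hu.2,
      integral_mul_const_of_integrable (hf.mono_set (Ioc_subset_Ioc_left hu.1.le))]
  rw [intervalIntegral.integral_of_le hat, intervalIntegral.integral_of_le hat,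
    setIntegral_congr_fun measurableSet_Ioc hs, setIntegral_congr_fun measurableSet_Ioc hu]
  exact integral_integral_swap hF

variable {R Z : ℝ → A} {M : A} {a b t : ℝ}

theorem IsIntegralSolOn.sub_eq_intervalIntegral (hZ : IsIntegralSolOn R M a b Z)
    (ht : t ∈ Icc a b) : Z t - M = ∫ s in a..t, R s * Z s := by
  rw [hZ.2 t ht, add_sub_cancel_left]

theorem IsIntegralSolOn.integral_mul_sub_eq (hZ : IsIntegralSolOn R M a b Z)
    (hR : IntegrableOn R (Icc a b)) (ht : t ∈ Icc a b) :
    ∫ s in a..t, R s * (Z s - M) = (Z t - M) - (∫ s in a..t, R s) * M := by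
  have hRt := hR.intervalIntegrable_of_mem_Icc ht
  have hRM : ∫ s in a..t, R s * M = (∫ s in a..t, R s) * M := by
    simp only [intervalIntegral.integral_of_le ht.1]
    exact integral_mul_const_of_integrable hRt.1
  simp only [mul_sub]
  rw [intervalIntegral.integral_sub (hZ.1.intervalIntegrable_of_mem_Icc ht) (hRt.mul_const M),
    hRM, hZ.sub_eq_intervalIntegral ht]

theorem IsIntegralSolOn.sub_eq (hZ : IsIntegralSolOn R M a b Z)
    (hR : IntegrableOn R (Icc a b)) (ht : t ∈ Icc a b) :
    Z t - M = (∫ s in a..t, R s) * M + ∫ u in a..t, (∫ s in u..t, R s) * (R u * Z u) := by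
  have hprim : EqOn (fun s => R s * (Z s - M)) (fun s => R s * ∫ u in a..s, R u * Z u)
      (uIcc a t) := fun s hs => by
    rw [uIcc_of_le ht.1] at hs
    simp only [hZ.sub_eq_intervalIntegral (Icc_subset_Icc_right ht.2 hs)]
  rw [← intervalIntegral_mul_primitive ht.1 (hR.intervalIntegrable_of_mem_Icc ht)
    (hZ.1.intervalIntegrable_of_mem_Icc ht), ← intervalIntegral.integral_congr hprim,
    hZ.integral_mul_sub_eq hR ht, add_sub_cancel]

end Decomposition

section Estimates

variable {A : Type*} [NormedRing A] [NormedAlgebra ℝ A] {R Z : ℝ → A} {a b t : ℝ}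

theorem IsIntegralSolOn.norm_integral_le_of_norm_sub_one_le {δ : ℝ}
    (hZ : IsIntegralSolOn R 1 a b Z) (hR : IntegrableOn R (Icc a b))
    (hδ : ∀ s ∈ Icc a b, ‖Z s - 1‖ ≤ δ) (ht : t ∈ Icc a b) :
    ‖∫ s in a..t, R s‖ ≤ δ + (∫ s in Icc a b, ‖R s‖) * δ := by
  have hδ0 : 0 ≤ δ := (norm_nonneg _).trans (hδ t ht)
  have h := hZ.integral_mul_sub_eq hR ht
  rw [mul_one] at h
  rw [← sub_sub_cancel (Z t - 1) (∫ s in a..t, R s), ← h]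
  refine (norm_sub_le _ _).trans (add_le_add (hδ t ht) ?_)
  exact norm_intervalIntegral_le_integral_norm_mul ht hR hδ0 fun s hs =>
    (norm_mul_le _ _).trans (mul_le_mul_of_nonneg_left (hδ s hs) (norm_nonneg _))

theorem IsIntegralSolOn.norm_sub_one_le_of_norm_integral_le {η B : ℝ}
    (hZ : IsIntegralSolOn R 1 a b Z) (hR : IntegrableOn R (Icc a b))
    (hη : ∀ s ∈ Icc a b, ‖∫ u in a..s, R u‖ ≤ η) (hB : ∀ s ∈ Icc a b, ‖Z s‖ ≤ B)
    (ht : t ∈ Icc a b) :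
    ‖Z t - 1‖ ≤ η + (∫ s in Icc a b, ‖R s‖) * (2 * η * B) := by
  have hη0 : 0 ≤ η := (norm_nonneg _).trans (hη t ht)
  have hB0 : 0 ≤ B := (norm_nonneg _).trans (hB t ht)
  have htail : ∀ u ∈ Icc a b, ‖∫ s in u..t, R s‖ ≤ 2 * η := fun u hu => by
    rw [← intervalIntegral.integral_interval_sub_left (hR.intervalIntegrable_of_mem_Icc ht)
      (hR.intervalIntegrable_of_mem_Icc hu)]
    linarith [norm_sub_le (∫ s in a..t, R s) (∫ s in a..u, R s), hη t ht, hη u hu]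
  rw [hZ.sub_eq hR ht, mul_one]
  refine (norm_add_le _ _).trans (add_le_add (hη t ht) ?_)
  refine norm_intervalIntegral_le_integral_norm_mul ht hR (by positivity) fun u hu => ?_
  calc ‖(∫ s in u..t, R s) * (R u * Z u)‖ ≤ (2 * η) * (‖R u‖ * B) :=
        (norm_mul_le _ _).trans (mul_le_mul (htail u hu) ((norm_mul_le _ _).trans
          (mul_le_mul_of_nonneg_left (hB u hu) (norm_nonneg _))) (norm_nonneg _)
          (by positivity))
    _ = ‖R u‖ * (2 * η * B) := by ring

end Estimates

/-- **Levin's proposition (α)**: under the additional condition, membership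
`R(·;ε) ∈ 𝓜^m` is equivalent to the uniform convergence to zero of the indefinite
integrals `R^∨(t;ε) = ∫_a^t R(s;ε) ds`. -/
theorem stmt3_levin_alpha
    (m : ℕ) (a b ε₀ : ℝ) (hab : a < b) (hε₀ : 0 < ε₀)
    (R : ℝ → ℝ → Mat m)
    (hR : ∀ ε ∈ Icc 0 ε₀, IntegrableOn (R ε) (Icc a b))
    (hcond : ∃ C, ∀ᶠ ε in 𝓝[>] (0 : ℝ), (∫ t in Icc a b, ‖R ε t‖) ≤ C) :
    MemM m a b ε₀ R ↔
      TendstoUniformlyOn (fun ε t => ∫ s in a..t, R ε s) (fun _ => 0)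
        (𝓝[>] (0 : ℝ)) (Icc a b) := by
  obtain ⟨C, hC⟩ := hcond
  have hεIcc : ∀ᶠ ε in 𝓝[>] (0 : ℝ), ε ∈ Icc 0 ε₀ :=
    mem_of_superset (Ioo_mem_nhdsGT hε₀) Ioo_subset_Icc_self
  constructor
  · rintro ⟨Z, hZ, hZ1⟩
    refine hZ1.of_norm_sub_le_mul (1 + C) fun δ hδ => ?_
    filter_upwards [hC, hεIcc] with ε hCε hε hZε t ht
    rw [sub_zero]
    calc ‖∫ s in a..t, R ε s‖ ≤ δ + (∫ s in Icc a b, ‖R ε s‖) * δ :=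
          IsIntegralSolOn.norm_integral_le_of_norm_sub_one_le
            ⟨(hZ ε hε).1, (hZ ε hε).2.2⟩ (hR ε hε) hZε ht
      _ ≤ δ + C * δ := by gcongr
      _ = (1 + C) * δ := by ring
  · intro h
    choose! Z hZ hZB using fun ε (hε : ε ∈ Icc 0 ε₀) =>
      exists_isIntegralSolOn_forall_norm_le_two_pow hab.le (hR ε hε) (1 : Mat m)
    refine ⟨Z, fun ε hε => ⟨(hZ ε hε).1, (hZ ε hε).apply_left hab.le, (hZ ε hε).2⟩, ?_⟩
    set B := 2 ^ (⌈2 * C⌉₊ + 1) * ‖(1 : Mat m)‖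
    refine h.of_norm_sub_le_mul (1 + C * (2 * B)) fun η hη => ?_
    filter_upwards [hC, hεIcc] with ε hCε hε hRε t ht
    have hB := hZB ε hε ⌈2 * C⌉₊ (hCε.trans (by linarith [Nat.le_ceil (2 * C)]))
    calc ‖Z ε t - 1‖ ≤ η + (∫ s in Icc a b, ‖R ε s‖) * (2 * η * B) :=
          (hZ ε hε).norm_sub_one_le_of_norm_integral_le (hR ε hε) (by simpa using hRε) hB ht
      _ ≤ η + C * (2 * η * B) := by gcongr
      _ = (1 + C * (2 * B)) * η := by ring
end

section
/- For ε ∈ (0,1] define the 2×2 matrix function on [0,1]: R(t;ε) with zero diagonal, upper-right entry ε^{-1/2} cos(t/ε) and lower-left entry ε^{-1/2} sin(2t/ε). Then the family R(·;ε) belongs to the class 𝓜², i.e., the matrix solution Z(t;ε) of the Cauchy problem Z'(t;ε) = R(t;ε)Z(t;ε), Z(0;ε) = I₂ on [0,1] satisfies sup_{t∈[0,1]} ‖Z(t;ε) − I₂‖ → 0 as ε → 0⁺. -/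
open MeasureTheory Filter Set Topology

/-- The 2×2 matrix function of Example 1:
`R(t;ε) = [[0, ε^{-1/2} cos(t/ε)], [ε^{-1/2} sin(2t/ε), 0]]`. -/
noncomputable def Rex (ε t : ℝ) : Mat 2 :=
  Matrix.toEuclideanCLM (𝕜 := ℂ)
    !![0, (((Real.sqrt ε)⁻¹ * Real.cos (t / ε) : ℝ) : ℂ);
       (((Real.sqrt ε)⁻¹ * Real.sin (2 * t / ε) : ℝ) : ℂ), 0]

/-! The primitive `W = ∫₀ᵗ R` of the fast oscillating coefficient is `O(√ε)`. Differentiating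
`Z - WZ + V`, where `V = ∫₀ᵗ W R`, gives `Z(t) - I = W(t)Z(t) - V(t) - ∫₀ᵗ W R (Z - I)`. Here
`W R = sin²(t/ε) cos(t/ε) · diag(2, 1)` is bounded and its primitive `V` is `O(ε)`, so, with
`‖W Z‖ ≤ ‖W‖ (1 + ‖Z - I‖)`, Gronwall's inequality gives `‖Z(t) - I‖ = O(√ε)` uniformly on
`[0, 1]`. The solutions are the sums of the Peano–Baker series. -/

open Real
open scoped Interval Nat

theorem le_mul_exp_of_le_add_mul_integral {f : ℝ → ℝ} {a K T : ℝ} (hf : Continuous f)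
    (hK : 0 ≤ K) (h : ∀ t ∈ Icc 0 T, f t ≤ a + K * ∫ s in 0..t, f s) :
    ∀ t ∈ Icc 0 T, f t ≤ a * exp (K * t) := by
  set u : ℝ → ℝ := fun t => a + K * ∫ s in 0..t, f s
  have hu : ∀ t, HasDerivAt u (K * f t) t := fun t =>
    ((hf.integral_hasStrictDerivAt 0 t).hasDerivAt.const_mul K).const_add a
  have hu_le := le_gronwallBound_of_liminf_deriv_right_le (δ := a) (ε := 0) (a := 0) (b := T)
    (fun t _ => (hu t).continuousAt.continuousWithinAt)
    (fun t _ _ hr => (hu t).hasDerivWithinAt.liminf_right_slope_le hr) (by simp [u])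
    (fun t ht => by simpa using mul_le_mul_of_nonneg_left (h t (Ico_subset_Icc_self ht)) hK)
  intro t ht
  simpa [gronwallBound_ε0] using (h t ht).trans (hu_le t ht)

theorem tendstoUniformlyOn_of_norm_sub_le {ι α E : Type*} [SeminormedAddCommGroup E]
    {F : ι → α → E} {f : α → E} {l : Filter ι} {s : Set α} {b : ι → ℝ}
    (hb : Tendsto b l (𝓝 0)) (h : ∀ᶠ i in l, ∀ x ∈ s, ‖F i x - f x‖ ≤ b i) :
    TendstoUniformlyOn F f l s :=
  Metric.tendstoUniformlyOn_iff.2 fun e he => (h.and (hb.eventually (gt_mem_nhds he))).mono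
    fun _ hi x hx => by rw [dist_eq_norm']; exact (hi.1 x hx).trans_lt hi.2

section PeanoBaker

variable {A : Type*} [NormedRing A] [NormedSpace ℝ A]

noncomputable def peanoBakerTerm (R : ℝ → A) : ℕ → ℝ → A
  | 0 => fun _ => 1
  | n + 1 => fun t => ∫ s in 0..t, R s * peanoBakerTerm R n s

variable {R : ℝ → A} {K : ℝ}

theorem continuous_peanoBakerTerm (hR : Continuous R) (n : ℕ) :
    Continuous (peanoBakerTerm R n) := by
  induction n with
  | zero => exact continuous_const
  | succ n ih =>
    exact intervalIntegral.continuous_primitive (fun _ _ => (hR.mul ih).intervalIntegrable _ _) 0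

theorem norm_peanoBakerTerm_le [NormOneClass A] (hK : ∀ t, ‖R t‖ ≤ K) (n : ℕ) (t : ℝ) :
    ‖peanoBakerTerm R n t‖ ≤ (K * |t|) ^ n / n ! := by
  induction n generalizing t with
  | zero => simp [peanoBakerTerm]
  | succ n ih =>
    have hK0 : 0 ≤ K := (norm_nonneg _).trans (hK 0)
    calc ‖peanoBakerTerm R (n + 1) t‖
        ≤ ∫ s in Ι 0 t, K ^ (n + 1) / n ! * |s - 0| ^ n := by
          rw [peanoBakerTerm, intervalIntegral.norm_integral_eq_norm_integral_uIoc]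
          refine norm_integral_le_of_norm_le ((continuous_const.mul
            ((continuous_id.sub continuous_const).abs.pow n)).integrableOn_uIoc)
            (ae_of_all _ fun s => ?_)
          calc ‖R s * peanoBakerTerm R n s‖ ≤ K * ((K * |s|) ^ n / n !) :=
                (norm_mul_le _ _).trans (mul_le_mul (hK s) (ih s) (norm_nonneg _) hK0)
            _ = _ := by rw [sub_zero]; ring
      _ = (K * |t|) ^ (n + 1) / (n + 1)! := by
          rw [integral_const_mul, integral_pow_abs_sub_uIoc, sub_zero, Nat.factorial_succ]
          push_cast
          field_simp
          ring

variable [NormOneClass A] [CompleteSpace A]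

theorem summable_peanoBakerTerm (hK : ∀ t, ‖R t‖ ≤ K) (t : ℝ) :
    Summable fun n => peanoBakerTerm R n t :=
  .of_norm_bounded (Real.summable_pow_div_factorial (K * |t|)) (norm_peanoBakerTerm_le hK · t)

theorem continuous_tsum_peanoBakerTerm (hR : Continuous R) (hK : ∀ t, ‖R t‖ ≤ K) :
    Continuous fun t => ∑' n, peanoBakerTerm R n t := by
  have hK0 : 0 ≤ K := (norm_nonneg _).trans (hK 0)
  refine continuous_iff_continuousAt.2 fun t => ?_
  have hon : ContinuousOn (fun t => ∑' n, peanoBakerTerm R n t) (Icc (-(|t| + 1)) (|t| + 1)) :=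
    continuousOn_tsum (fun n => (continuous_peanoBakerTerm hR n).continuousOn)
      (Real.summable_pow_div_factorial (K * (|t| + 1))) fun n s hs =>
        (norm_peanoBakerTerm_le hK n s).trans (by gcongr; exact abs_le.2 hs)
  exact hon.continuousAt (Icc_mem_nhds (by linarith [neg_abs_le t]) (by linarith [le_abs_self t]))

theorem tsum_peanoBakerTerm_eq (hR : Continuous R) (hK : ∀ t, ‖R t‖ ≤ K) (t : ℝ) :
    ∑' n, peanoBakerTerm R n t = 1 + ∫ s in 0..t, R s * ∑' n, peanoBakerTerm R n s := by
  have hK0 : 0 ≤ K := (norm_nonneg _).trans (hK 0)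
  have hint : HasSum (fun n => peanoBakerTerm R (n + 1) t)
      (∫ s in 0..t, R s * ∑' n, peanoBakerTerm R n s) :=
    intervalIntegral.hasSum_integral_of_dominated_convergence
      (fun n _ => K * ((K * |t|) ^ n / n !))
      (fun n => (hR.mul (continuous_peanoBakerTerm hR n)).aestronglyMeasurable)
      (fun n => ae_of_all _ fun s hs => by
        have hst : |s| ≤ |t| := by
          simpa using abs_sub_left_of_mem_uIcc (uIoc_subset_uIcc hs)
        calc ‖R s * peanoBakerTerm R n s‖ ≤ K * ((K * |s|) ^ n / n !) :=
              (norm_mul_le _ _).trans (mul_le_mul (hK s) (norm_peanoBakerTerm_le hK n s)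
                (norm_nonneg _) hK0)
          _ ≤ K * ((K * |t|) ^ n / n !) := by gcongr)
      (ae_of_all _ fun _ _ => (Real.summable_pow_div_factorial _).mul_left K)
      intervalIntegrable_const
      (ae_of_all _ fun s _ => (summable_peanoBakerTerm hK s).hasSum.mul_left (R s))
  rw [(summable_peanoBakerTerm hK t).tsum_eq_zero_add, hint.tsum_eq]
  rfl

theorem exists_continuous_eq_one_add_integral (hR : Continuous R) (hK : ∀ t, ‖R t‖ ≤ K) :
    ∃ Z : ℝ → A, Continuous Z ∧ ∀ t, Z t = 1 + ∫ s in 0..t, R s * Z s :=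
  ⟨_, continuous_tsum_peanoBakerTerm hR hK, tsum_peanoBakerTerm_eq hR hK⟩

end PeanoBaker

section Averaging

variable {A : Type*} [NormedRing A] [NormedAlgebra ℝ A] {R W V Z : ℝ → A}

theorem hasDerivAt_of_eq_one_add_integral [CompleteSpace A] (hR : Continuous R)
    (hZ : Continuous Z) (hZeq : ∀ t, Z t = 1 + ∫ s in 0..t, R s * Z s) (t : ℝ) :
    HasDerivAt Z (R t * Z t) t :=
  ((hR.mul hZ).integral_hasStrictDerivAt 0 t).hasDerivAt.const_add 1
    |>.congr_of_eventuallyEq (.of_forall hZeq)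

theorem norm_integral_mul_le {P f : ℝ → A} {M t : ℝ} (ht : 0 ≤ t) (hP : ∀ s, ‖P s‖ ≤ M)
    (hf : Continuous f) : ‖∫ s in 0..t, P s * f s‖ ≤ M * ∫ s in 0..t, ‖f s‖ := by
  rw [← intervalIntegral.integral_const_mul]
  exact intervalIntegral.norm_integral_le_of_norm_le ht
    (ae_of_all _ fun s _ => (norm_mul_le _ _).trans (by gcongr; exact hP s))
    ((continuous_const.mul hf.norm).intervalIntegrable _ _)

theorem sub_one_eq_of_averaging [CompleteSpace A] (hR : Continuous R)
    (hZ : ∀ t, HasDerivAt Z (R t * Z t) t) (hZ0 : Z 0 = 1) (hW : ∀ t, HasDerivAt W (R t) t)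
    (hW0 : W 0 = 0) (hV : ∀ t, HasDerivAt V (W t * R t) t) (hV0 : V 0 = 0) (t : ℝ) :
    Z t - 1 = W t * Z t - V t - ∫ s in 0..t, W s * R s * (Z s - 1) := by
  have hZc : Continuous Z := continuous_iff_continuousAt.2 fun t => (hZ t).continuousAt
  have hWc : Continuous W := continuous_iff_continuousAt.2 fun t => (hW t).continuousAt
  have hF : ∀ s, HasDerivAt (fun s => Z s - W s * Z s + V s) (-(W s * R s * (Z s - 1))) s :=
    fun s => ((hZ s).sub ((hW s).mul (hZ s))).add (hV s) |>.congr_deriv (by noncomm_ring)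
  have hFTC := intervalIntegral.integral_eq_sub_of_hasDerivAt (fun s _ => hF s)
    (((hWc.mul hR).mul (hZc.sub continuous_const)).neg.intervalIntegrable 0 t)
  rw [intervalIntegral.integral_neg, hZ0, hW0, hV0] at hFTC
  rw [eq_sub_iff_add_eq, eq_comm, ← neg_neg (∫ s in 0..t, _), hFTC]
  noncomm_ring

theorem norm_sub_one_le_of_averaging [CompleteSpace A] [NormOneClass A] {δ M η : ℝ}
    (hR : Continuous R) (hZ : ∀ t, HasDerivAt Z (R t * Z t) t) (hZ0 : Z 0 = 1)
    (hW : ∀ t, HasDerivAt W (R t) t) (hW0 : W 0 = 0) (hV : ∀ t, HasDerivAt V (W t * R t) t)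
    (hV0 : V 0 = 0) (hWδ : ∀ t, ‖W t‖ ≤ δ) (hδ : δ ≤ 1 / 2) (hWR : ∀ t, ‖W t * R t‖ ≤ M)
    (hVη : ∀ t, ‖V t‖ ≤ η) {t : ℝ} (ht : 0 ≤ t) :
    ‖Z t - 1‖ ≤ 2 * (δ + η) * exp (2 * M * t) := by
  have hZc : Continuous Z := continuous_iff_continuousAt.2 fun t => (hZ t).continuousAt
  have hM : 0 ≤ M := (norm_nonneg _).trans (hWR 0)
  refine le_mul_exp_of_le_add_mul_integral (f := fun s => ‖Z s - 1‖)
    (hZc.sub continuous_const).norm (by positivity)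
    (fun s hs => ?_) t ⟨ht, le_rfl⟩
  have hWZ : ‖W s * Z s‖ ≤ δ * (1 + ‖Z s - 1‖) :=
    (norm_mul_le _ _).trans <| mul_le_mul (hWδ s)
      (by simpa using norm_le_norm_add_norm_sub' (Z s) 1) (norm_nonneg _)
      ((norm_nonneg _).trans (hWδ s))
  have hδe : δ * ‖Z s - 1‖ ≤ 1 / 2 * ‖Z s - 1‖ := mul_le_mul_of_nonneg_right hδ (norm_nonneg _)
  have hI := norm_integral_mul_le (f := fun r => Z r - 1) hs.1 hWR (hZc.sub continuous_const)
  have hsplit : ‖Z s - 1‖ ≤ ‖W s * Z s‖ + ‖V s‖ + ‖∫ r in 0..s, W r * R r * (Z r - 1)‖ := by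
    rw [sub_one_eq_of_averaging hR hZ hZ0 hW hW0 hV hV0 s]
    exact (norm_sub_le _ _).trans (by gcongr; exact norm_sub_le _ _)
  linarith [hVη s]

end Averaging

noncomputable def matUnit {n : ℕ} (i j : Fin n) : Mat n :=
  Matrix.toEuclideanCLM (𝕜 := ℂ) (Matrix.single i j 1)

theorem matUnit_mul_matUnit {n : ℕ} (i j k : Fin n) :
    matUnit i j * matUnit j k = matUnit i k := by
  rw [matUnit, matUnit, ← map_mul, Matrix.single_mul_single_same, one_mul, matUnit]

theorem matUnit_mul_matUnit_of_ne {n : ℕ} (i : Fin n) {j k : Fin n} (h : j ≠ k) (l : Fin n) :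
    matUnit i j * matUnit k l = 0 := by
  rw [matUnit, matUnit, ← map_mul, Matrix.single_mul_single_of_ne _ _ _ _ h, map_zero]

theorem norm_matUnit_le {n : ℕ} (i j : Fin n) : ‖matUnit i j‖ ≤ 1 := by
  refine ContinuousLinearMap.opNorm_le_bound _ zero_le_one fun x => ?_
  rw [one_mul, matUnit, ← WithLp.toLp_ofLp (p := 2) x, Matrix.toEuclideanCLM_toLp,
    Matrix.single_mulVec_eq, one_mul, WithLp.toLp_smul, norm_smul]
  simpa using PiLp.norm_apply_le x j

theorem norm_smul_matUnit_le {n : ℕ} (a : ℝ) (i j : Fin n) : ‖a • matUnit i j‖ ≤ |a| :=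
  (ContinuousLinearMap.opNorm_smul_le a _).trans
    (mul_le_of_le_one_right (abs_nonneg a) (norm_matUnit_le i j))

-- `smul_mul_smul_comm` does not apply: instance search finds no
-- `IsScalarTower ℝ (Mat n) (Mat n)` for the action `ContinuousLinearMap.instSMul`.
theorem smul_mul_smul_real {n : ℕ} (a b : ℝ) (X Y : Mat n) :
    (a • X) * (b • Y) = (a * b) • (X * Y) := by
  ext v
  simp [smul_smul]

theorem smul_matUnit_mul_smul_matUnit {n : ℕ} (a b : ℝ) (i j k : Fin n) :
    (a • matUnit i j) * (b • matUnit j k) = (a * b) • matUnit i k := by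
  rw [smul_mul_smul_real, matUnit_mul_matUnit]

theorem smul_matUnit_mul_smul_matUnit_of_ne {n : ℕ} (a b : ℝ) (i : Fin n) {j k : Fin n}
    (h : j ≠ k) (l : Fin n) : (a • matUnit i j) * (b • matUnit k l) = 0 := by
  rw [smul_mul_smul_real, matUnit_mul_matUnit_of_ne _ h]
  ext
  simp

theorem Rex_eq (ε t : ℝ) :
    Rex ε t =
      ((√ε)⁻¹ * cos (t / ε)) • matUnit 0 1 + ((√ε)⁻¹ * sin (2 * t / ε)) • matUnit 1 0 := by
  have h : ∀ a b : ℝ, !![0, (a : ℂ); (b : ℂ), 0] =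
      (a : ℂ) • Matrix.single 0 1 1 + (b : ℂ) • Matrix.single 1 0 1 := fun a b => by
    ext i j; fin_cases i <;> fin_cases j <;> simp
  rw [Rex, h, map_add, map_smul, map_smul]
  exact congrArg₂ (· + ·) (Complex.coe_smul _ (matUnit 0 1))
    (Complex.coe_smul _ (matUnit 1 0))

theorem continuous_Rex (ε : ℝ) : Continuous (Rex ε) := by
  simp_rw [funext (Rex_eq ε)]
  fun_prop

theorem norm_Rex_le (ε t : ℝ) : ‖Rex ε t‖ ≤ 2 * (√ε)⁻¹ := by
  have hε : 0 ≤ (√ε)⁻¹ := by positivity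
  rw [Rex_eq]
  refine (norm_add_le _ _).trans ?_
  grw [norm_smul_matUnit_le, norm_smul_matUnit_le, abs_mul, abs_mul, abs_of_nonneg hε,
    abs_cos_le_one, abs_sin_le_one]
  linarith

noncomputable def Wex (ε t : ℝ) : Mat 2 :=
  (√ε * sin (t / ε)) • matUnit 0 1 + (√ε * sin (t / ε) ^ 2) • matUnit 1 0

noncomputable def Vex (ε t : ℝ) : Mat 2 :=
  (2 * ε / 3 * sin (t / ε) ^ 3) • matUnit 0 0 + (ε / 3 * sin (t / ε) ^ 3) • matUnit 1 1

theorem Wex_mul_Rex {ε : ℝ} (hε : 0 < ε) (t : ℝ) :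
    Wex ε t * Rex ε t = (2 * sin (t / ε) ^ 2 * cos (t / ε)) • matUnit 0 0 +
      (sin (t / ε) ^ 2 * cos (t / ε)) • matUnit 1 1 := by
  have hsq : √ε * (√ε)⁻¹ = 1 := mul_inv_cancel₀ (sqrt_pos.2 hε).ne'
  simp only [Wex, Rex_eq, add_mul, mul_add, smul_matUnit_mul_smul_matUnit,
    smul_matUnit_mul_smul_matUnit_of_ne _ _ _ zero_ne_one,
    smul_matUnit_mul_smul_matUnit_of_ne _ _ _ one_ne_zero, zero_add, add_zero]
  rw [add_comm, mul_div_assoc, sin_two_mul]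
  congr 2
  · linear_combination (2 * sin (t / ε) ^ 2 * cos (t / ε)) * hsq
  · linear_combination (sin (t / ε) ^ 2 * cos (t / ε)) * hsq

theorem hasDerivAt_Wex (ε t : ℝ) : HasDerivAt (Wex ε) (Rex ε t) t := by
  have hs : HasDerivAt (fun t => sin (t / ε)) (cos (t / ε) / ε) t := by
    simpa [div_eq_mul_inv] using (hasDerivAt_id t).div_const ε |>.sin
  have h1 : √ε * (cos (t / ε) / ε) = (√ε)⁻¹ * cos (t / ε) := by
    rw [← one_div, ← sqrt_div_self']; ring
  have h2 : √ε * (2 * sin (t / ε) * (cos (t / ε) / ε)) = (√ε)⁻¹ * sin (2 * t / ε) := by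
    rw [mul_div_assoc, sin_two_mul]; linear_combination (2 * sin (t / ε)) * h1
  rw [Rex_eq, ← h1, ← h2]
  exact ((hs.const_mul √ε).smul_const _).add (((hs.pow 2).const_mul √ε).smul_const _)
    |>.congr_deriv (by simp)

theorem hasDerivAt_Vex {ε : ℝ} (hε : 0 < ε) (t : ℝ) :
    HasDerivAt (Vex ε) (Wex ε t * Rex ε t) t := by
  have hs : HasDerivAt (fun t => sin (t / ε)) (cos (t / ε) / ε) t := by
    simpa [div_eq_mul_inv] using (hasDerivAt_id t).div_const ε |>.sin
  rw [Wex_mul_Rex hε]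
  refine (((hs.pow 3).const_mul _).smul_const _).add (((hs.pow 3).const_mul _).smul_const _)
    |>.congr_deriv ?_
  congr 2 <;> field_simp <;> ring

theorem norm_Wex_le (ε t : ℝ) : ‖Wex ε t‖ ≤ 2 * √ε := by
  refine (norm_add_le _ _).trans ?_
  grw [norm_smul_matUnit_le, norm_smul_matUnit_le, abs_mul, abs_mul,
    abs_of_nonneg (sqrt_nonneg ε), abs_sin_le_one, abs_pow,
    pow_le_one₀ (abs_nonneg _) (abs_sin_le_one _)]
  linarith

theorem norm_Wex_mul_Rex_le {ε : ℝ} (hε : 0 < ε) (t : ℝ) : ‖Wex ε t * Rex ε t‖ ≤ 3 := by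
  have h : |sin (t / ε) ^ 2 * cos (t / ε)| ≤ 1 := by
    rw [abs_mul, abs_pow]
    exact mul_le_one₀ (pow_le_one₀ (abs_nonneg _) (abs_sin_le_one _)) (abs_nonneg _)
      (abs_cos_le_one _)
  rw [Wex_mul_Rex hε]
  refine (norm_add_le _ _).trans ?_
  grw [norm_smul_matUnit_le, norm_smul_matUnit_le, mul_assoc, abs_mul, h]
  norm_num

theorem norm_Vex_le {ε : ℝ} (hε : 0 ≤ ε) (t : ℝ) : ‖Vex ε t‖ ≤ ε := by
  have h : |sin (t / ε) ^ 3| ≤ 1 := by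
    rw [abs_pow]
    exact pow_le_one₀ (abs_nonneg _) (abs_sin_le_one _)
  refine (norm_add_le _ _).trans ?_
  grw [norm_smul_matUnit_le, norm_smul_matUnit_le, abs_mul, abs_mul, h,
    abs_of_nonneg (by positivity : 0 ≤ 2 * ε / 3), abs_of_nonneg (by positivity : 0 ≤ ε / 3)]
  linarith

theorem Wex_zero (ε : ℝ) : Wex ε 0 = 0 := by
  ext
  simp [Wex]

theorem Vex_zero (ε : ℝ) : Vex ε 0 = 0 := by
  ext
  simp [Vex]

/-- **Example 1, part 2**: the family `R(·;ε)` belongs to the class `𝓜²` on `[0,1]`,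
i.e. the matrix solutions of `Z' = R(t;ε)Z`, `Z(0;ε) = I₂` converge to `I₂` uniformly
on `[0,1]` as `ε → 0⁺`. -/
theorem stmt15_example1_memM : MemM 2 0 1 1 (fun ε t => Rex ε t) := by
  choose Z hZc hZeq using fun ε =>
    exists_continuous_eq_one_add_integral (continuous_Rex ε) (norm_Rex_le ε)
  have hZ0 : ∀ ε, Z ε 0 = 1 := fun ε => by simpa using hZeq ε 0
  refine ⟨Z, fun ε _ => ⟨((continuous_Rex ε).mul (hZc ε)).integrableOn_Icc, hZ0 ε,
    fun t _ => hZeq ε t⟩,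
    tendstoUniformlyOn_of_norm_sub_le (b := fun ε => 2 * (2 * √ε + ε) * exp 6) ?_ ?_⟩
  · have hb : Continuous fun ε : ℝ => 2 * (2 * √ε + ε) * exp 6 := by fun_prop
    simpa using (hb.tendsto 0).mono_left nhdsWithin_le_nhds
  filter_upwards [Ioo_mem_nhdsGT (by norm_num : (0 : ℝ) < 1 / 16)]
    with ε ⟨hε, hε16⟩ t ⟨ht0, ht1⟩
  have hδ : 2 * √ε ≤ 1 / 2 := by
    have : √ε < 1 / 4 := (sqrt_lt' (by norm_num)).2 (by linarith)
    linarith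
  calc ‖Z ε t - 1‖ ≤ 2 * (2 * √ε + ε) * exp (2 * 3 * t) :=
        norm_sub_one_le_of_averaging (continuous_Rex ε)
          (hasDerivAt_of_eq_one_add_integral (continuous_Rex ε) (hZc ε) (hZeq ε)) (hZ0 ε)
          (hasDerivAt_Wex ε) (Wex_zero ε) (hasDerivAt_Vex hε) (Vex_zero ε) (norm_Wex_le ε) hδ
          (norm_Wex_mul_Rex_le hε) (norm_Vex_le hε.le) ht0
    _ ≤ 2 * (2 * √ε + ε) * exp 6 := by gcongr; linarith
end

section
/- Let [a,b] ⊂ ℝ with a < b, m, n ∈ ℕ with n ≥ 2, fixed points t₁, …, t_n ∈ [a,b], and matrices B_k(ε) ∈ ℂ^{m×m} for ε ∈ [0,ε₀], k = 1,…,n. Define the continuous linear operators U_ε : C([a,b]; ℂ^m) → ℂ^m by U_ε y := B₁(ε)y(t₁) + B₂(ε)y(t₂) + … + B_n(ε)y(t_n). Then, as ε → 0⁺, the following three conditions are equivalent: (i) ‖U_ε − U₀‖ → 0 in operator norm; (ii) U_ε y → U₀ y for every y ∈ W¹₁([a,b]; ℂ^m); (iii) B_k(ε) → B_k(0) for each k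 = 1, 2, …, n. -/
open MeasureTheory Filter Set Topology

/-! The difference `U_ε − U₀` is a sum of point evaluations with coefficients `B_k(ε) − B_k(0)`,
so its norm is at most `∑ ‖B_k(ε) − B_k(0)‖`. Conversely, applying `U_ε` to a smooth function
that equals `v` at `t_k` and vanishes at the other nodes (a Lagrange basis polynomial times `v`)
returns `B_k(ε) v`; on the finite-dimensional space `ℂ^m`, pointwise convergence of operators
is norm convergence. -/

theorem ContinuousLinearMap.tendsto_of_forall_tendsto_apply {α 𝕜 E F : Type*}
    [NontriviallyNormedField 𝕜] [CompleteSpace 𝕜]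
    [NormedAddCommGroup E] [NormedSpace 𝕜 E] [FiniteDimensional 𝕜 E]
    [NormedAddCommGroup F] [NormedSpace 𝕜 F] {l : Filter α}
    {f : α → E →L[𝕜] F} {g : E →L[𝕜] F} (h : ∀ x, Tendsto (fun a => f a x) l (𝓝 (g x))) :
    Tendsto f l (𝓝 g) := by
  let v := Module.finBasis 𝕜 E
  obtain ⟨C, -, hC⟩ := v.exists_opNorm_le (F := F)
  have hbound : ∀ a, ‖f a - g‖ ≤ C * ∑ i, ‖(f a - g) (v i)‖ := fun a =>
    hC (Finset.sum_nonneg fun i _ => norm_nonneg _)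
      fun i => Finset.single_le_sum (f := fun i => ‖(f a - g) (v i)‖)
        (fun i _ => norm_nonneg _) (Finset.mem_univ i)
  have hsum : Tendsto (fun a => C * ∑ i, ‖(f a - g) (v i)‖) l (𝓝 (C * ∑ _i, (0 : ℝ))) :=
    tendsto_const_nhds.mul <| tendsto_finsetSum _ fun i _ =>
      tendsto_iff_norm_sub_tendsto_zero.1 (h (v i))
  rw [tendsto_iff_norm_sub_tendsto_zero]
  simp only [Finset.sum_const_zero, mul_zero] at hsum
  exact squeeze_zero (fun a => norm_nonneg _) hbound hsum

theorem ContinuousLinearMap.opNorm_le_sum_of_apply_eq_sum_eval {𝕜 X E F ι : Type*}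
    [NontriviallyNormedField 𝕜] [TopologicalSpace X] [CompactSpace X]
    [NormedAddCommGroup E] [NormedSpace 𝕜 E] [NormedAddCommGroup F] [NormedSpace 𝕜 F]
    [Fintype ι] (x : ι → X) (A : ι → E →L[𝕜] F) (T : C(X, E) →L[𝕜] F)
    (hT : ∀ g, T g = ∑ k, A k (g (x k))) :
    ‖T‖ ≤ ∑ k, ‖A k‖ := by
  refine T.opNorm_le_bound (Finset.sum_nonneg fun k _ => norm_nonneg _) fun g => ?_
  rw [hT, Finset.sum_mul]
  refine (norm_sum_le _ _).trans (Finset.sum_le_sum fun k _ => ?_)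
  calc ‖A k (g (x k))‖ ≤ ‖A k‖ * ‖g (x k)‖ := (A k).le_opNorm _
    _ ≤ ‖A k‖ * ‖g‖ := by gcongr; exact g.norm_coe_le_norm _

theorem toC_apply {m : ℕ} {a b : ℝ} {y : ℝ → Vec m} (hy : ContinuousOn y (Icc a b))
    (s : Icc a b) : toC m a b y s = y s := by
  simp only [toC, dif_pos hy]
  rfl

theorem isW11_of_hasDerivAt {m : ℕ} {a b : ℝ} {y y' : ℝ → Vec m}
    (hy : ∀ s, HasDerivAt y (y' s) s) (hy' : Continuous y') : IsW11 m a b y :=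
  ⟨y', hy'.integrableOn_Icc, fun s _ => by
    rw [intervalIntegral.integral_eq_sub_of_hasDerivAt (fun x _ => hy x)
      (hy'.intervalIntegrable a s), add_sub_cancel]⟩

theorem exists_isW11_apply_eq_ite {m n : ℕ} (a b : ℝ) {t : Fin n → ℝ}
    (ht : Function.Injective t) (k : Fin n) (v : Vec m) :
    ∃ y : ℝ → Vec m, IsW11 m a b y ∧ Continuous y ∧ ∀ j, y (t j) = if j = k then v else 0 := by
  set P := Lagrange.basis Finset.univ t k
  refine ⟨fun s => ((P.eval s : ℝ) : ℂ) • v, ?_, by fun_prop, fun j => ?_⟩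
  · exact isW11_of_hasDerivAt (fun s => (P.hasDerivAt s).ofReal_comp.smul_const v)
      (by fun_prop)
  · rcases eq_or_ne j k with rfl | hjk
    · simp [P, Lagrange.eval_basis_self ht.injOn (Finset.mem_univ j)]
    · simp [P, Lagrange.eval_basis_of_ne hjk.symm (Finset.mem_univ j), hjk]

theorem stmt19_multipoint_general
    (m n : ℕ) (a b : ℝ)
    (t : Fin n → ℝ) (ht : ∀ k, t k ∈ Icc a b) (htinj : Function.Injective t)
    (B : Fin n → ℝ → Mat m)
    (U : ℝ → (C(Icc a b, Vec m) →L[ℂ] Vec m))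
    (hU : ∀ (ε : ℝ) (g : C(Icc a b, Vec m)),
      U ε g = ∑ k, (B k ε) (g ⟨t k, ht k⟩)) :
    (Tendsto (fun ε => ‖U ε - U 0‖) (𝓝[>] (0 : ℝ)) (𝓝 0) ↔
      ∀ k, Tendsto (fun ε => B k ε) (𝓝[>] (0 : ℝ)) (𝓝 (B k 0))) ∧
    ((∀ y : ℝ → Vec m, IsW11 m a b y →
        Tendsto (fun ε => U ε (toC m a b y)) (𝓝[>] (0 : ℝ)) (𝓝 (U 0 (toC m a b y)))) ↔
      ∀ k, Tendsto (fun ε => B k ε) (𝓝[>] (0 : ℝ)) (𝓝 (B k 0))) := by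
  have hnorm_of_coeff (hcoeff : ∀ k, Tendsto (fun ε => B k ε) (𝓝[>] 0) (𝓝 (B k 0))) :
      Tendsto (fun ε => ‖U ε - U 0‖) (𝓝[>] 0) (𝓝 0) := by
    have hsum : Tendsto (fun ε => ∑ k, ‖B k ε - B k 0‖) (𝓝[>] 0) (𝓝 (∑ _k : Fin n, 0)) :=
      tendsto_finsetSum _ fun k _ => tendsto_iff_norm_sub_tendsto_zero.1 (hcoeff k)
    rw [Finset.sum_const_zero] at hsum
    refine squeeze_zero (fun ε => (U ε - U 0).opNorm_nonneg) (fun ε => ?_) hsum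
    refine (U ε - U 0).opNorm_le_sum_of_apply_eq_sum_eval (fun k => ⟨t k, ht k⟩) _ fun g => ?_
    simp only [sub_apply, hU, Finset.sum_sub_distrib]
  have happly_of_norm (hnorm : Tendsto (fun ε => ‖U ε - U 0‖) (𝓝[>] 0) (𝓝 0)) (y : ℝ → Vec m) :
      Tendsto (fun ε => U ε (toC m a b y)) (𝓝[>] 0) (𝓝 (U 0 (toC m a b y))) :=
    ((continuous_id.clm_apply continuous_const).tendsto (U 0)).comp
      (tendsto_iff_norm_sub_tendsto_zero.2 hnorm)
  have hcoeff_of_apply (happly : ∀ y : ℝ → Vec m, IsW11 m a b y →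
      Tendsto (fun ε => U ε (toC m a b y)) (𝓝[>] 0) (𝓝 (U 0 (toC m a b y)))) (k : Fin n) :
      Tendsto (fun ε => B k ε) (𝓝[>] 0) (𝓝 (B k 0)) := by
    refine ContinuousLinearMap.tendsto_of_forall_tendsto_apply fun v => ?_
    obtain ⟨y, hyW, hyC, hy⟩ := exists_isW11_apply_eq_ite a b htinj k v
    have hUy (ε : ℝ) : U ε (toC m a b y) = B k ε v := by
      simp [hU, toC_apply hyC.continuousOn, hy, apply_ite]
    simpa only [hUy] using happly y hyW
  exact ⟨⟨fun hnorm => hcoeff_of_apply fun y _ => happly_of_norm hnorm y, hnorm_of_coeff⟩,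
    ⟨hcoeff_of_apply, fun hcoeff y _ => happly_of_norm (hnorm_of_coeff hcoeff) y⟩⟩

/-- **Multipoint boundary operators**: for
`U_ε y = B₁(ε)y(t₁) + ⋯ + B_n(ε)y(t_n)` with fixed distinct points `t₁, …, t_n ∈ [a,b]`,
the conditions `‖U_ε − U₀‖ → 0`, `U_ε y → U₀ y` for every `y ∈ W¹₁`, and
`B_k(ε) → B_k(0)` for each `k` are mutually equivalent as `ε → 0⁺`. -/
theorem stmt19_multipoint
    (m n : ℕ) (hn : 2 ≤ n) (a b ε₀ : ℝ) (hab : a < b) (hε₀ : 0 < ε₀)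
    (t : Fin n → ℝ) (ht : ∀ k, t k ∈ Icc a b) (htinj : Function.Injective t)
    (B : Fin n → ℝ → Mat m)
    (U : ℝ → (C(Icc a b, Vec m) →L[ℂ] Vec m))
    (hU : ∀ (ε : ℝ) (g : C(Icc a b, Vec m)),
      U ε g = ∑ k, (B k ε) (g ⟨t k, ht k⟩)) :
    (Tendsto (fun ε => ‖U ε - U 0‖) (𝓝[>] (0 : ℝ)) (𝓝 0) ↔
      ∀ k, Tendsto (fun ε => B k ε) (𝓝[>] (0 : ℝ)) (𝓝 (B k 0))) ∧
    ((∀ y : ℝ → Vec m, IsW11 m a b y →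
        Tendsto (fun ε => U ε (toC m a b y)) (𝓝[>] (0 : ℝ)) (𝓝 (U 0 (toC m a b y)))) ↔
      ∀ k, Tendsto (fun ε => B k ε) (𝓝[>] (0 : ℝ)) (𝓝 (B k 0))) :=
  stmt19_multipoint_general m n a b t ht htinj B U hU
end
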